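/- arXiv:1803.01463 — 2 statements merged into one kernel-verified Lean document; each statement's English description precedes it below -/
import Mathlib

section
/- Let k be a field of characteristic 0 and m ≥ 2, k_m = k[t]/(t^m). The relative Milnor K-group K_n^M(k_m, (t)) := ker(K_n^M(k_m) → K_n^M(k)) (kernel of evaluation at t=0) is generated by Milnor symbols {a_1, a_2, ..., a_n} with a_1 ∈ 1 + t·k_m and a_2, ..., a_n ∈ k_m^×. -/
open FreeAbelianGroup

/-! Milnor K-theory of a commutative ring, presented by generators (tuples of units) and
relations (multilinearity and the Steinberg relation). -/

/-- Relations defining Milnor K-theory. -/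
def milnorRel (R : Type) [CommRing R] (n : ℕ) :
    AddSubgroup (FreeAbelianGroup (Fin n → Rˣ)) :=
  AddSubgroup.closure
    ({x | ∃ (u : Fin n → Rˣ) (i : Fin n) (a b : Rˣ),
        x = of (Function.update u i (a * b)) - of (Function.update u i a)
              - of (Function.update u i b)} ∪
     {x | ∃ (u : Fin n → Rˣ) (i j : Fin n), i ≠ j ∧ ((u i : R) + (u j : R) = 1) ∧ x = of u})

/-- The `n`-th Milnor K-group of a commutative ring. -/
abbrev MilnorK (R : Type) [CommRing R] (n : ℕ) : Type :=
  FreeAbelianGroup (Fin n → Rˣ) ⧸ milnorRel R n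

/-- The Milnor symbol `{u 0, …, u (n-1)}`. -/
def milnorSymbol {R : Type} [CommRing R] {n : ℕ} (u : Fin n → Rˣ) : MilnorK R n :=
  QuotientAddGroup.mk (of u)

/-- Functoriality of Milnor K-groups. -/
def MilnorK.map {R S : Type} [CommRing R] [CommRing S] (f : R →+* S) (n : ℕ) :
    MilnorK R n →+ MilnorK S n :=
  QuotientAddGroup.lift (milnorRel R n)
    ((QuotientAddGroup.mk' (milnorRel S n)).comp
      (FreeAbelianGroup.lift (fun u : Fin n → Rˣ =>
        of (fun i => Units.map (f : R →* S) (u i)))))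
    (by
      show milnorRel R n ≤ AddMonoidHom.ker _
      refine (AddSubgroup.closure_le _).2 ?_
      have h : ∀ (u : Fin n → Rˣ) (i : Fin n) (c : Rˣ),
          (fun j => Units.map (f : R →* S) (Function.update u i c j)) =
            Function.update (fun j => Units.map (f : R →* S) (u j)) i
              (Units.map (f : R →* S) c) := fun u i c =>
        funext fun j => Function.apply_update (fun _ x => Units.map (f : R →* S) x) u i c j
      rintro x (⟨u, i, a, b, rfl⟩ | ⟨u, i, j, hij, h1, rfl⟩) <;>
        simp only [SetLike.mem_coe, AddMonoidHom.mem_ker, map_sub, AddMonoidHom.coe_comp,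
          Function.comp_apply, FreeAbelianGroup.lift_apply_of, QuotientAddGroup.mk'_apply,
          ← QuotientAddGroup.mk_sub, QuotientAddGroup.eq_zero_iff]
      · exact AddSubgroup.subset_closure (Or.inl ⟨fun j => Units.map (f : R →* S) (u j), i,
          Units.map (f : R →* S) a, Units.map (f : R →* S) b,
          by rw [h u i (a * b), h u i a, h u i b, map_mul]⟩)
      · refine AddSubgroup.subset_closure (Or.inr ⟨fun j => Units.map (f : R →* S) (u j),
          i, j, hij, ?_, rfl⟩)
        simp only [Units.coe_map, MonoidHom.coe_coe]
        rw [← map_add, h1, map_one])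

/-- The truncated polynomial ring `k_m := k[t]/(t^m)`. -/
abbrev TruncPoly (k : Type) [Field k] (m : ℕ) : Type :=
  Polynomial k ⧸ Ideal.span {(Polynomial.X : Polynomial k) ^ m}

/-- The ideal `t·k_m` of `k[t]/(t^m)`. -/
noncomputable abbrev TruncPoly.tIdeal (k : Type) [Field k] (m : ℕ) : Ideal (TruncPoly k m) :=
  Ideal.span {Ideal.Quotient.mk _ Polynomial.X}

/-- Evaluation at `t = 0`, `k[t]/(t^m) → k`. -/
noncomputable def evalZero (k : Type) [Field k] (m : ℕ) (hm : 0 < m) :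
    TruncPoly k m →+* k :=
  Ideal.Quotient.lift _ (Polynomial.evalRingHom 0) (by
    intro a ha
    rw [Ideal.mem_span_singleton] at ha
    obtain ⟨c, rfl⟩ := ha
    simp [zero_pow hm.ne'])

/-! The relative group is generated by symbols having *some* entry in `1 + t·k_m`: writing each
entry `u i` as `c i * w i` with `c i ∈ k` constant and `w i ∈ 1 + t·k_m`, multilinearity telescopes
`{u} - {c}` into such symbols, and `{c}` comes from `K_n^M(k)`. To move that entry to the first
slot one needs anticommutativity, i.e. `{a, -a} = 0`. When `1 - a` is a unit this is the classical
computation from the Steinberg relation; when `a ≡ 1 (mod t)` it is reduced to that case by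
factoring `a = 2 · 3 · (a/6)`, which is where characteristic `0` is used. -/

open Function

theorem exists_units_map_eq_natCast {R K : Type} [CommRing R] [Field K] (φ : R →+* K)
    [IsLocalHom φ] (n : ℕ) (hn : (n : K) ≠ 0) : ∃ u : Rˣ, φ u = n :=
  ⟨(IsUnit.of_map φ (n : R) (by rw [map_natCast]; exact hn.isUnit)).unit, by simp⟩

section SteinbergSymbol

variable {R A : Type} [CommRing R] [AddCommGroup A]

structure IsSteinbergSymbol (B : Rˣ → Rˣ → A) : Prop where
  mul_left : ∀ a a' b, B (a * a') b = B a b + B a' b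
  mul_right : ∀ a b b', B a (b * b') = B a b + B a b'
  apply_eq_zero_of_add_eq_one : ∀ a b : Rˣ, (a : R) + b = 1 → B a b = 0

namespace IsSteinbergSymbol

variable {B : Rˣ → Rˣ → A}

theorem one_left (hB : IsSteinbergSymbol B) (b : Rˣ) : B 1 b = 0 := by
  simpa using hB.mul_left 1 1 b

theorem inv_left (hB : IsSteinbergSymbol B) (a b : Rˣ) : B a⁻¹ b = -B a b := by
  rw [eq_neg_iff_add_eq_zero, add_comm, ← hB.mul_left, mul_inv_cancel, hB.one_left]

theorem apply_neg_self_of_add_eq_one (hB : IsSteinbergSymbol B) {a b : Rˣ}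
    (h : (a : R) + b = 1) : B a (-a) = 0 := by
  set c := -b * a⁻¹
  have hc : B a c = 0 := by
    rw [← neg_eq_zero, ← hB.inv_left]
    refine hB.apply_eq_zero_of_add_eq_one _ _ ?_
    simp only [c, Units.val_mul, Units.val_neg]
    linear_combination (-(a⁻¹ : Rˣ) : R) * h + a.inv_mul
  have hb : b = -a * c := by
    ext
    simp only [c, Units.val_mul, Units.val_neg]
    linear_combination (-(b : R)) * a.mul_inv
  have := hB.apply_eq_zero_of_add_eq_one a b h
  rwa [hb, hB.mul_right, hc, add_zero] at this

theorem apply_mul_neg_mul (hB : IsSteinbergSymbol B) (a b : Rˣ) :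
    B (a * b) (-(a * b)) = B a (-a) + B b (-b) + (B a b + B b a) := by
  have ha : B a (-(a * b)) = B a (-a) + B a b := by rw [← hB.mul_right, neg_mul]
  have hb : B b (-(a * b)) = B b (-b) + B b a := by rw [← hB.mul_right, neg_mul, mul_comm]
  rw [hB.mul_left, ha, hb]
  abel

variable {K : Type} [Field K]

theorem apply_neg_self_of_map_ne_one (φ : R →+* K) [IsLocalHom φ] (hB : IsSteinbergSymbol B)
    {a : Rˣ} (ha : φ a ≠ 1) : B a (-a) = 0 := by
  have : IsUnit (1 - (a : R)) :=
    IsUnit.of_map φ _ (by rw [map_sub, map_one]; exact (sub_ne_zero.2 ha.symm).isUnit)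
  exact hB.apply_neg_self_of_add_eq_one (b := this.unit) (by simp)

theorem add_swap_eq_zero_of_map_ne_one (φ : R →+* K) [IsLocalHom φ] (hB : IsSteinbergSymbol B)
    {a b : Rˣ} (ha : φ a ≠ 1) (hb : φ b ≠ 1) (hab : φ a * φ b ≠ 1) : B a b + B b a = 0 := by
  have := hB.apply_mul_neg_mul a b
  rwa [hB.apply_neg_self_of_map_ne_one φ ha, hB.apply_neg_self_of_map_ne_one φ hb,
    hB.apply_neg_self_of_map_ne_one φ (by rwa [Units.val_mul, map_mul]), zero_add, zero_add,
    eq_comm] at this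

theorem apply_neg_self [CharZero K] (φ : R →+* K) [IsLocalHom φ] (hB : IsSteinbergSymbol B)
    (a : Rˣ) : B a (-a) = 0 := by
  rcases ne_or_eq (φ a) 1 with ha | ha
  · exact hB.apply_neg_self_of_map_ne_one φ ha
  obtain ⟨two, h2⟩ := exists_units_map_eq_natCast φ 2 (by norm_num)
  obtain ⟨three, h3⟩ := exists_units_map_eq_natCast φ 3 (by norm_num)
  set y := two⁻¹ * a
  set z := three⁻¹ * y
  have hy : φ y = 2⁻¹ := by simp [y, map_units_inv, h2, ha]
  have hz : φ z = 3⁻¹ * 2⁻¹ := by simp [z, map_units_inv, h3, hy]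
  -- `a = two * three * z`, and no partial product other than `a` itself has `φ`-value `1`.
  have h23 := hB.add_swap_eq_zero_of_map_ne_one φ (a := two) (b := three)
    (by rw [h2]; norm_num) (by rw [h3]; norm_num) (by rw [h2, h3]; norm_num)
  have h2z := hB.add_swap_eq_zero_of_map_ne_one φ (a := two) (b := z)
    (by rw [h2]; norm_num) (by rw [hz]; norm_num) (by rw [h2, hz]; norm_num)
  have h2y : B two y + B y two = 0 := by
    rw [show y = three * z by simp [z], hB.mul_right, hB.mul_left, add_add_add_comm, h23, h2z,
      add_zero]
  have := hB.apply_mul_neg_mul two y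
  rwa [show two * y = a by simp [y],
    hB.apply_neg_self_of_map_ne_one φ (a := two) (by rw [h2]; norm_num),
    hB.apply_neg_self_of_map_ne_one φ (a := y) (by rw [hy]; norm_num), h2y, add_zero,
    add_zero] at this

theorem anticomm [CharZero K] (φ : R →+* K) [IsLocalHom φ] (hB : IsSteinbergSymbol B)
    (a b : Rˣ) : B a b = -B b a := by
  have := hB.apply_mul_neg_mul a b
  rw [hB.apply_neg_self φ, hB.apply_neg_self φ, hB.apply_neg_self φ, zero_add, zero_add,
    eq_comm] at this
  exact eq_neg_of_add_eq_zero_left this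

end IsSteinbergSymbol

end SteinbergSymbol

section MilnorSymbol

variable {R : Type} [CommRing R] {n : ℕ}

theorem milnorSymbol_update_mul (u : Fin n → Rˣ) (i : Fin n) (a b : Rˣ) :
    milnorSymbol (update u i (a * b)) =
      milnorSymbol (update u i a) + milnorSymbol (update u i b) := by
  have h : of (update u i (a * b)) - of (update u i a) - of (update u i b) ∈ milnorRel R n :=
    AddSubgroup.subset_closure (Or.inl ⟨u, i, a, b, rfl⟩)
  rwa [← QuotientAddGroup.eq_zero_iff, QuotientAddGroup.mk_sub, QuotientAddGroup.mk_sub, sub_sub,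
    sub_eq_zero] at h

theorem milnorSymbol_eq_zero_of_add_eq_one (u : Fin n → Rˣ) {i j : Fin n} (hij : i ≠ j)
    (h : (u i : R) + u j = 1) : milnorSymbol u = 0 :=
  (QuotientAddGroup.eq_zero_iff _).2 (AddSubgroup.subset_closure (Or.inr ⟨u, i, j, hij, h, rfl⟩))

theorem milnorSymbol_eq_zero_of_eq_one (u : Fin n → Rˣ) (i : Fin n) (h : u i = 1) :
    milnorSymbol u = 0 := by
  have h1 := milnorSymbol_update_mul u i 1 1
  rwa [mul_one, ← h, update_eq_self, left_eq_add] at h1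

def pairSymbol (v : Fin n → Rˣ) (i j : Fin n) (a b : Rˣ) : MilnorK R n :=
  milnorSymbol (update (update v i a) j b)

theorem isSteinbergSymbol_pairSymbol (v : Fin n → Rˣ) {i j : Fin n} (hij : i ≠ j) :
    IsSteinbergSymbol (pairSymbol v i j) where
  mul_left a a' b := by
    simp only [pairSymbol, update_comm hij _ b v]
    exact milnorSymbol_update_mul _ i a a'
  mul_right a b b' := milnorSymbol_update_mul _ j b b'
  apply_eq_zero_of_add_eq_one a b h :=
    milnorSymbol_eq_zero_of_add_eq_one _ hij (by simpa [update_of_ne hij] using h)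

theorem milnorSymbol_comp_swap {K : Type} [Field K] [CharZero K] (φ : R →+* K) [IsLocalHom φ]
    (u : Fin n → Rˣ) {i j : Fin n} (hij : i ≠ j) :
    milnorSymbol (u ∘ Equiv.swap i j) = -milnorSymbol u := by
  have h := (isSteinbergSymbol_pairSymbol u hij.symm).anticomm φ (u i) (u j)
  rwa [pairSymbol, pairSymbol, update_eq_self, update_eq_self, ← Equiv.comp_swap_eq_update] at h

theorem MilnorK.closure_range_milnorSymbol :
    AddSubgroup.closure (Set.range (milnorSymbol : (Fin n → Rˣ) → MilnorK R n)) = ⊤ := by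
  rw [eq_top_iff]
  rintro x -
  induction x using QuotientAddGroup.induction_on with | H x => ?_
  induction x using FreeAbelianGroup.induction_on with
  | zero => exact zero_mem _
  | of u => exact AddSubgroup.subset_closure ⟨u, rfl⟩
  | neg x hx => exact neg_mem hx
  | add x y hx hy => exact add_mem hx hy

end MilnorSymbol

section RelativeMilnorK

variable {R K : Type} [CommRing R] [Field K] {n : ℕ} (φ : R →+* K)

theorem milnorSymbol_sub_mem_of_map_eq (H : AddSubgroup (MilnorK R n))
    (hH : ∀ (u : Fin n → Rˣ) (i : Fin n), φ (u i) = 1 → milnorSymbol u ∈ H)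
    {u v : Fin n → Rˣ} (huv : ∀ i, φ (u i) = φ (v i)) : milnorSymbol u - milnorSymbol v ∈ H := by
  suffices ∀ s : Finset (Fin n), milnorSymbol u - milnorSymbol (s.piecewise v u) ∈ H by
    simpa using this Finset.univ
  intro s
  induction s using Finset.induction_on with
  | empty => simp
  | insert i s hi ih =>
    have hw : φ ((v i)⁻¹ * u i : Rˣ) = 1 := by
      rw [Units.val_mul, map_mul, huv, ← map_mul, Units.inv_mul, map_one]
    have hsplit : milnorSymbol (s.piecewise v u) = milnorSymbol ((insert i s).piecewise v u) +
        milnorSymbol (update (s.piecewise v u) i ((v i)⁻¹ * u i)) := by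
      rw [Finset.piecewise_insert, ← milnorSymbol_update_mul, mul_inv_cancel_left,
        ← Finset.piecewise_eq_of_notMem s v u hi, update_eq_self]
    have := add_mem ih (hH (update (s.piecewise v u) i _) i (by rwa [update_self]))
    rwa [hsplit, sub_add_eq_sub_sub, sub_add_cancel] at this

theorem milnorSymbol_mem_closure_of_map_eq_one [CharZero K] [IsLocalHom φ] (i₀ : Fin n)
    {u : Fin n → Rˣ} {i : Fin n} (hu : φ (u i) = 1) :
    milnorSymbol u ∈
      AddSubgroup.closure {x | ∃ u : Fin n → Rˣ, φ (u i₀) = 1 ∧ x = milnorSymbol u} := by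
  by_cases hi : i = i₀
  · subst hi
    exact AddSubgroup.subset_closure ⟨u, hu, rfl⟩
  rw [← neg_neg (milnorSymbol u), ← milnorSymbol_comp_swap φ u (Ne.symm hi)]
  exact neg_mem (AddSubgroup.subset_closure ⟨_, by simpa using hu, rfl⟩)

theorem MilnorK.ker_map_eq_closure [CharZero K] [IsLocalHom φ] {σ : K →+* R}
    (hσ : LeftInverse φ σ) (i₀ : Fin n) :
    (MilnorK.map φ n).ker =
      AddSubgroup.closure {x | ∃ u : Fin n → Rˣ, φ (u i₀) = 1 ∧ x = milnorSymbol u} := by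
  set C := AddSubgroup.closure {x | ∃ u : Fin n → Rˣ, φ (u i₀) = 1 ∧ x = milnorSymbol u}
  apply le_antisymm
  · have hC : ⊤ ≤ C.comap (AddMonoidHom.id _ - (MilnorK.map σ n).comp (MilnorK.map φ n)) := by
      rw [← MilnorK.closure_range_milnorSymbol, AddSubgroup.closure_le]
      rintro _ ⟨u, rfl⟩
      exact milnorSymbol_sub_mem_of_map_eq φ C
        (fun _ _ hu => milnorSymbol_mem_closure_of_map_eq_one φ i₀ hu) (fun i => by simp [hσ _])
    intro x hx
    simpa [AddMonoidHom.mem_ker.1 hx] using hC (AddSubgroup.mem_top x)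
  · rw [AddSubgroup.closure_le]
    rintro _ ⟨u, hu, rfl⟩
    exact milnorSymbol_eq_zero_of_eq_one _ i₀ (Units.ext hu)

end RelativeMilnorK

theorem isLocalHom_of_leftInverse_of_isNilpotent {R S : Type} [CommRing R] [CommRing S]
    {φ : R →+* S} {σ : S →+* R} (hσ : LeftInverse φ σ) (hnil : ∀ x, φ x = 0 → IsNilpotent x) :
    IsLocalHom φ where
  map_nonunit x hx := by
    have hsub : IsNilpotent (x - σ (φ x)) := hnil _ (by rw [map_sub, hσ, sub_self])
    simpa using hsub.isUnit_add_left_of_commute (hx.map σ) (Commute.all _ _)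

namespace TruncPoly

variable {k : Type} [Field k] {m : ℕ} (hm : 0 < m)

theorem evalZero_mk (p : Polynomial k) :
    evalZero k m hm (Ideal.Quotient.mk _ p) = p.eval 0 :=
  Ideal.Quotient.lift_mk _ _ _

theorem evalZero_algebraMap : LeftInverse (evalZero k m hm) (algebraMap k (TruncPoly k m)) :=
  fun c => by
    rw [← Ideal.Quotient.mk_algebraMap, evalZero_mk, Polynomial.algebraMap_eq,
      Polynomial.eval_C]

theorem tIdeal_eq_ker : tIdeal k m = RingHom.ker (evalZero k m hm) := by
  ext x
  obtain ⟨p, rfl⟩ := Ideal.Quotient.mk_surjective x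
  rw [tIdeal, Ideal.mem_span_singleton, RingHom.mem_ker, evalZero_mk]
  constructor
  · rintro ⟨y, hy⟩
    rw [← evalZero_mk hm, hy, map_mul, evalZero_mk, Polynomial.eval_X, zero_mul]
  · rw [← Polynomial.coeff_zero_eq_eval_zero, ← Polynomial.X_dvd_iff]
    exact map_dvd _

theorem isNilpotent_of_mem_tIdeal {x : TruncPoly k m} (hx : x ∈ tIdeal k m) : IsNilpotent x := by
  obtain ⟨y, rfl⟩ := Ideal.mem_span_singleton'.1 hx
  refine ⟨m, ?_⟩
  rw [mul_pow, ← map_pow, Ideal.Quotient.eq_zero_iff_mem.2 (Ideal.mem_span_singleton_self _),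
    mul_zero]

instance : IsLocalHom (evalZero k m hm) :=
  isLocalHom_of_leftInverse_of_isNilpotent (evalZero_algebraMap hm)
    fun _ hx => isNilpotent_of_mem_tIdeal ((tIdeal_eq_ker hm).ge hx)

end TruncPoly

/-- Let `k` be a field of characteristic `0`, `m ≥ 2`,
`k_m = k[t]/(t^m)`.  The relative Milnor K-group
`K_n^M(k_m,(t)) := ker(K_n^M(k_m) → K_n^M(k))` (kernel of evaluation at `t = 0`) is
generated by Milnor symbols `{a₁, …, aₙ}` with `a₁ ∈ 1 + t·k_m` (and `a₂,…,aₙ ∈ k_m^×`). -/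
theorem stmt10 {k : Type} [Field k] [CharZero k] (m n : ℕ) (hm : 2 ≤ m) (hn : 0 < n) :
    AddSubgroup.closure
        {x : MilnorK (TruncPoly k m) n | ∃ u : Fin n → (TruncPoly k m)ˣ,
          ((u ⟨0, hn⟩ : TruncPoly k m) - 1 ∈ TruncPoly.tIdeal k m) ∧ x = milnorSymbol u}
      = (MilnorK.map (evalZero k m (by omega)) n).ker := by
  have hm₀ : 0 < m := by omega
  rw [MilnorK.ker_map_eq_closure _ (TruncPoly.evalZero_algebraMap hm₀) ⟨0, hn⟩,
    TruncPoly.tIdeal_eq_ker hm₀]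
  simp only [RingHom.mem_ker, map_sub, map_one, sub_eq_zero]
end

section
/- Let k be a field of characteristic 0, m ≥ 1, 1 ≤ i ≤ m−1, and n ≥ 1. For units a_1,...,a_n ∈ k[[t]]^× and b_1,...,b_n ∈ k[[t]]^× with a_j ≡ b_j mod t^m for all j, the residues at t = 0 of (1/t^i) dlog(a_1)∧···∧dlog(a_n) and (1/t^i) dlog(b_1)∧···∧dlog(b_n) agree in Ω^{n−1}_{k/Z}. -/
open PowerSeries

set_option synthInstance.maxHeartbeats 1000000
set_option maxHeartbeats 4000000

noncomputable section

/-- `dlog x = x⁻¹ · dx` for an invertible element of a commutative ring. -/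
def dlogF {K : Type} [CommRing K] [Inv K] [Algebra ℤ K] (x : K) : KaehlerDifferential ℤ K :=
  x⁻¹ • KaehlerDifferential.D ℤ K x

theorem myLeib {R S : Type*} [CommRing R] [CommRing S] [Algebra R S] (u v : S) :
    KaehlerDifferential.D R S (u * v)
      = u • KaehlerDifferential.D R S v + v • KaehlerDifferential.D R S u :=
  Derivation.leibniz _ u v

theorem myLeibPow {R S : Type*} [CommRing R] [CommRing S] [Algebra R S] (u : S) (e : ℕ) :
    KaehlerDifferential.D R S (u ^ e) = e • u ^ (e - 1) • KaehlerDifferential.D R S u :=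
  Derivation.leibniz_pow _ u e

theorem mySmulAdd {R S : Type*} [CommRing R] [CommRing S] [Algebra R S] (c : S)
    (x y : Ω[S⁄R]) : c • (x + y) = c • x + c • y := smul_add _ _ _

theorem mySmulSmul {R S : Type*} [CommRing R] [CommRing S] [Algebra R S] (c d : S)
    (x : Ω[S⁄R]) : c • d • x = (c * d) • x := smul_smul _ _ _

theorem mySubSmul {R S : Type*} [CommRing R] [CommRing S] [Algebra R S] (c d : S)
    (x : Ω[S⁄R]) : (c - d) • x = c • x - d • x := sub_smul _ _ _

theorem dlog_sub {k : Type} [Field k] (m i : ℕ) (him : i + 1 ≤ m) (a b : (PowerSeries k)ˣ)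
    (c : PowerSeries k) (hc : (a : PowerSeries k) = (b : PowerSeries k) + X ^ m * c) :
    (algebraMap (PowerSeries k) (LaurentSeries k) X ^ i)⁻¹ •
      (dlogF (algebraMap (PowerSeries k) (LaurentSeries k) (a : PowerSeries k))
        - dlogF (algebraMap (PowerSeries k) (LaurentSeries k) (b : PowerSeries k)))
    = (algebraMap (PowerSeries k) (LaurentSeries k) (((a⁻¹ : (PowerSeries k)ˣ) : PowerSeries k) * X ^ (m - i))) •
        KaehlerDifferential.D ℤ (LaurentSeries k) (algebraMap (PowerSeries k) (LaurentSeries k) c)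
      + (algebraMap (PowerSeries k) (LaurentSeries k) ((m : PowerSeries k) * ((a⁻¹ : (PowerSeries k)ˣ) : PowerSeries k) * X ^ (m - 1 - i) * c)) •
        KaehlerDifferential.D ℤ (LaurentSeries k) (algebraMap (PowerSeries k) (LaurentSeries k) X)
      + (algebraMap (PowerSeries k) (LaurentSeries k) (((a⁻¹ : (PowerSeries k)ˣ) : PowerSeries k) * ((b⁻¹ : (PowerSeries k)ˣ) : PowerSeries k) * (-(X ^ (m - i) * c)))) •
        KaehlerDifferential.D ℤ (LaurentSeries k) (algebraMap (PowerSeries k) (LaurentSeries k) (b : PowerSeries k)) := by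
  obtain ⟨q, rfl⟩ : ∃ q, m = q + 1 + i := ⟨m - 1 - i, by omega⟩
  simp only [show q + 1 + i - i = q + 1 from by omega, show q + 1 + i - 1 - i = q from by omega]
  set φ := algebraMap (PowerSeries k) (LaurentSeries k) with hφ
  have hxne : φ X ≠ 0 := by
    intro h
    have hinj : Function.Injective φ := by
      rw [hφ, LaurentSeries.coe_algebraMap]; exact HahnSeries.ofPowerSeries_injective
    exact X_ne_zero (hinj (h.trans (map_zero φ).symm))
  have hAinv : (φ (a : PowerSeries k))⁻¹ = φ ((a⁻¹ : (PowerSeries k)ˣ) : PowerSeries k) :=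
    inv_eq_of_mul_eq_one_right (by rw [← map_mul, Units.mul_inv, map_one])
  have hBinv : (φ (b : PowerSeries k))⁻¹ = φ ((b⁻¹ : (PowerSeries k)ˣ) : PowerSeries k) :=
    inv_eq_of_mul_eq_one_right (by rw [← map_mul, Units.mul_inv, map_one])
  have ha1 : φ ((a⁻¹ : (PowerSeries k)ˣ) : PowerSeries k) * φ (a : PowerSeries k) = 1 := by
    rw [← map_mul, Units.inv_mul, map_one]
  have hb1 : φ ((b⁻¹ : (PowerSeries k)ˣ) : PowerSeries k) * φ (b : PowerSeries k) = 1 := by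
    rw [← map_mul, Units.inv_mul, map_one]
  have hA : φ (a : PowerSeries k) = φ (b : PowerSeries k) + φ X ^ (q + 1 + i) * φ c := by
    rw [hc]; push_cast [map_add, map_mul, map_pow]; ring
  have hDA : KaehlerDifferential.D ℤ (LaurentSeries k) (φ (a : PowerSeries k))
      = KaehlerDifferential.D ℤ (LaurentSeries k) (φ (b : PowerSeries k))
        + (φ X ^ (q + 1 + i)) • KaehlerDifferential.D ℤ (LaurentSeries k) (φ c)
        + (((q + 1 + i : ℕ) : LaurentSeries k) * φ X ^ (q + i) * φ c) •
            KaehlerDifferential.D ℤ (LaurentSeries k) (φ X) := by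
    rw [hA, map_add, myLeib, myLeibPow, ← Nat.cast_smul_eq_nsmul (LaurentSeries k)]
    simp only [show q + 1 + i - 1 = q + i from by omega]
    simp only [mySmulSmul]
    rw [← add_assoc,
      show φ c * (((q + 1 + i : ℕ) : LaurentSeries k) * φ X ^ (q + i))
        = ((q + 1 + i : ℕ) : LaurentSeries k) * φ X ^ (q + i) * φ c from by ring]
  rw [inv_smul_eq_iff₀ (pow_ne_zero i hxne)]
  simp only [dlogF, hAinv, hBinv, hDA]
  simp only [mySmulAdd, mySmulSmul]
  rw [show φ ↑a⁻¹ * φ X ^ (q + 1 + i) = φ X ^ i * φ (↑a⁻¹ * X ^ (q + 1)) from by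
        simp only [map_mul, map_pow]; ring,
    show φ ↑a⁻¹ * (((q + 1 + i : ℕ) : LaurentSeries k) * φ X ^ (q + i) * φ c)
        = φ X ^ i * φ (((q + 1 + i : ℕ) : PowerSeries k) * ↑a⁻¹ * X ^ q * c) from by
        simp only [map_mul, map_pow, map_natCast]; ring,
    show φ X ^ i * φ (↑a⁻¹ * ↑b⁻¹ * -(X ^ (q + 1) * c)) = φ ↑a⁻¹ - φ ↑b⁻¹ from by
        simp only [map_mul, map_neg, map_pow]
        linear_combination φ (↑a⁻¹ : PowerSeries k) * hb1 - φ (↑b⁻¹ : PowerSeries k) * ha1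
          + φ (↑a⁻¹ : PowerSeries k) * φ (↑b⁻¹ : PowerSeries k) * hA,
    mySubSmul]
  abel

theorem myZeroSmul {R S : Type*} [CommRing R] [CommRing S] [Algebra R S]
    (x : Ω[S⁄R]) : (0 : S) • x = 0 := zero_smul _ _

theorem myOneSmul {R S : Type*} [CommRing R] [CommRing S] [Algebra R S]
    (x : Ω[S⁄R]) : (1 : S) • x = x := one_smul _ _

theorem myEsub {R M : Type*} [CommRing R] [AddCommGroup M] [Module R M] (c : R)
    (x y : ExteriorAlgebra R M) : c • x - c • y = c • (x - y) := (smul_sub _ _ _).symm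

theorem myEsmulsum {R M α : Type*} [CommRing R] [AddCommGroup M] [Module R M] (c : R)
    (s : Finset α) (f : α → ExteriorAlgebra R M) :
    c • ∑ x ∈ s, f x = ∑ x ∈ s, c • f x := Finset.smul_sum

theorem resKey {k : Type} [Field k] (n : ℕ)
    (Res : ExteriorAlgebra (LaurentSeries k) (KaehlerDifferential ℤ (LaurentSeries k)) →+
      ExteriorAlgebra k (KaehlerDifferential ℤ k))
    (hRes0 : ∀ (g : PowerSeries k) (c : Fin n → PowerSeries k),
      Res ((algebraMap (PowerSeries k) (LaurentSeries k) g) •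
        ExteriorAlgebra.ιMulti (LaurentSeries k) n
          (fun j => KaehlerDifferential.D ℤ (LaurentSeries k)
            (algebraMap (PowerSeries k) (LaurentSeries k) (c j)))) = 0)
    (G C : Fin n → Fin 3 → PowerSeries k) :
    Res (ExteriorAlgebra.ιMulti (LaurentSeries k) n
      (fun j => ∑ t : Fin 3, (algebraMap (PowerSeries k) (LaurentSeries k) (G j t)) •
        KaehlerDifferential.D ℤ (LaurentSeries k)
          (algebraMap (PowerSeries k) (LaurentSeries k) (C j t)))) = 0 := by
  have h1 : (ExteriorAlgebra.ιMulti (LaurentSeries k) n).toMultilinearMap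
      (fun j => ∑ t : Fin 3, (algebraMap (PowerSeries k) (LaurentSeries k) (G j t)) •
        KaehlerDifferential.D ℤ (LaurentSeries k)
          (algebraMap (PowerSeries k) (LaurentSeries k) (C j t)))
      = ∑ r : Fin n → Fin 3, (ExteriorAlgebra.ιMulti (LaurentSeries k) n).toMultilinearMap
          (fun j => (algebraMap (PowerSeries k) (LaurentSeries k) (G j (r j))) •
            KaehlerDifferential.D ℤ (LaurentSeries k)
              (algebraMap (PowerSeries k) (LaurentSeries k) (C j (r j)))) :=
    MultilinearMap.map_sum _ _
  simp only [AlternatingMap.coe_multilinearMap] at h1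
  rw [h1, map_sum]
  apply Finset.sum_eq_zero
  intro r _
  have h2 : (ExteriorAlgebra.ιMulti (LaurentSeries k) n)
      (fun j => (algebraMap (PowerSeries k) (LaurentSeries k) (G j (r j))) •
        KaehlerDifferential.D ℤ (LaurentSeries k)
          (algebraMap (PowerSeries k) (LaurentSeries k) (C j (r j))))
      = (algebraMap (PowerSeries k) (LaurentSeries k) (∏ j, G j (r j))) •
          (ExteriorAlgebra.ιMulti (LaurentSeries k) n)
            (fun j => KaehlerDifferential.D ℤ (LaurentSeries k)
              (algebraMap (PowerSeries k) (LaurentSeries k) (C j (r j)))) := by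
    rw [map_prod]
    exact MultilinearMap.map_smul_univ _ _ _
  rw [h2]
  exact hRes0 _ _

/-- Let `k` be a field of characteristic `0`, `m ≥ 1`, `1 ≤ i ≤ m−1`,
`n ≥ 1`.  For units `a₁,…,aₙ, b₁,…,bₙ ∈ k[[t]]ˣ` with `a_j ≡ b_j mod t^m` for all `j`,
the residues at `t = 0` of `(1/tⁱ)·dlog a₁∧⋯∧dlog aₙ` and `(1/tⁱ)·dlog b₁∧⋯∧dlog bₙ`
agree in `Ω^{n−1}_{k/ℤ}`.  The residue is axiomatized as any additive map `Res` on forms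
over `k((t))` vanishing on (the images of) forms that are regular at `t = 0`, i.e. on
`g·dc₁∧⋯∧dcₙ` with `g, c₁, …, cₙ ∈ k[[t]]`. -/
theorem stmt18 {k : Type} [Field k] [CharZero k] (m i n : ℕ)
    (hm : 1 ≤ m) (hi : 1 ≤ i) (him : i ≤ m - 1) (hn : 1 ≤ n)
    (a b : Fin n → (PowerSeries k)ˣ)
    (hab : ∀ j, ((a j : PowerSeries k) - b j) ∈ Ideal.span {(X : PowerSeries k) ^ m})
    (Res : ExteriorAlgebra (LaurentSeries k) (KaehlerDifferential ℤ (LaurentSeries k)) →+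
      ExteriorAlgebra k (KaehlerDifferential ℤ k))
    (hRes0 : ∀ (g : PowerSeries k) (c : Fin n → PowerSeries k),
      Res ((algebraMap (PowerSeries k) (LaurentSeries k) g) •
        ExteriorAlgebra.ιMulti (LaurentSeries k) n
          (fun j => KaehlerDifferential.D ℤ (LaurentSeries k)
            (algebraMap (PowerSeries k) (LaurentSeries k) (c j)))) = 0) :
    Res (((algebraMap (PowerSeries k) (LaurentSeries k) X ^ i)⁻¹) •
        ExteriorAlgebra.ιMulti (LaurentSeries k) n
          (fun j => dlogF (algebraMap (PowerSeries k) (LaurentSeries k) (a j))))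
      = Res (((algebraMap (PowerSeries k) (LaurentSeries k) X ^ i)⁻¹) •
          ExteriorAlgebra.ιMulti (LaurentSeries k) n
            (fun j => dlogF (algebraMap (PowerSeries k) (LaurentSeries k) (b j)))) := by
  obtain ⟨c, hc⟩ : ∃ c : Fin n → PowerSeries k,
      ∀ j, ((a j : PowerSeries k)) = ((b j : PowerSeries k)) + X ^ m * c j := by
    choose c' hc' using fun j => Ideal.mem_span_singleton'.mp (hab j)
    exact ⟨c', fun j => by linear_combination -hc' j⟩
  set φ := algebraMap (PowerSeries k) (LaurentSeries k) with hφ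
  have hxne : φ X ≠ 0 := by
    intro h
    have hinj : Function.Injective φ := by
      rw [hφ, LaurentSeries.coe_algebraMap]; exact HahnSeries.ofPowerSeries_injective
    exact X_ne_zero (hinj (h.trans (map_zero φ).symm))
  have hxi : (φ X ^ i) ≠ 0 := pow_ne_zero _ hxne
  have hinv : ∀ u : (PowerSeries k)ˣ, (φ (u : PowerSeries k))⁻¹ = φ ((u⁻¹ : (PowerSeries k)ˣ) : PowerSeries k) :=
    fun u => inv_eq_of_mul_eq_one_right (by rw [← map_mul, Units.mul_inv, map_one])
  set v : Fin n → Ω[LaurentSeries k⁄ℤ] := fun j => dlogF (φ ((a j : PowerSeries k))) with hv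
  set w : Fin n → Ω[LaurentSeries k⁄ℤ] := fun j => dlogF (φ ((b j : PowerSeries k))) with hw
  set δ : Fin n → Ω[LaurentSeries k⁄ℤ] := fun j => v j - w j with hδ
  -- the three-term slot expansions
  have hδ0 : ∀ j, δ j
      = φ ((((a j)⁻¹ : (PowerSeries k)ˣ) : PowerSeries k) * X ^ (m - 0)) •
          KaehlerDifferential.D ℤ (LaurentSeries k) (φ (c j))
        + φ ((m : PowerSeries k) * (((a j)⁻¹ : (PowerSeries k)ˣ) : PowerSeries k) * X ^ (m - 1 - 0) * c j) •
          KaehlerDifferential.D ℤ (LaurentSeries k) (φ X)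
        + φ ((((a j)⁻¹ : (PowerSeries k)ˣ) : PowerSeries k) * (((b j)⁻¹ : (PowerSeries k)ˣ) : PowerSeries k) * (-(X ^ (m - 0) * c j))) •
          KaehlerDifferential.D ℤ (LaurentSeries k) (φ ((b j : PowerSeries k))) := by
    intro j
    have h0 := dlog_sub (k := k) m 0 (by omega) (a j) (b j) (c j) (hc j)
    rw [pow_zero, inv_one, myOneSmul] at h0
    exact h0
  have hδi : ∀ j, (φ X ^ i)⁻¹ • δ j
      = φ ((((a j)⁻¹ : (PowerSeries k)ˣ) : PowerSeries k) * X ^ (m - i)) •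
          KaehlerDifferential.D ℤ (LaurentSeries k) (φ (c j))
        + φ ((m : PowerSeries k) * (((a j)⁻¹ : (PowerSeries k)ˣ) : PowerSeries k) * X ^ (m - 1 - i) * c j) •
          KaehlerDifferential.D ℤ (LaurentSeries k) (φ X)
        + φ ((((a j)⁻¹ : (PowerSeries k)ˣ) : PowerSeries k) * (((b j)⁻¹ : (PowerSeries k)ˣ) : PowerSeries k) * (-(X ^ (m - i) * c j))) •
          KaehlerDifferential.D ℤ (LaurentSeries k) (φ ((b j : PowerSeries k))) := by
    intro j
    exact dlog_sub (k := k) m i (by omega) (a j) (b j) (c j) (hc j)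
  have hwj : ∀ j, w j
      = φ ((0 : PowerSeries k)) • KaehlerDifferential.D ℤ (LaurentSeries k) (φ (c j))
        + φ ((0 : PowerSeries k)) • KaehlerDifferential.D ℤ (LaurentSeries k) (φ X)
        + φ (((b j)⁻¹ : (PowerSeries k)ˣ) : PowerSeries k) •
            KaehlerDifferential.D ℤ (LaurentSeries k) (φ ((b j : PowerSeries k))) := by
    intro j
    rw [map_zero, myZeroSmul, myZeroSmul, zero_add, zero_add, hw]
    show dlogF (φ ((b j : PowerSeries k))) = _
    rw [dlogF, hinv]
  -- each non-univ piecewise term has vanishing residue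
  have key : ∀ s : Finset (Fin n), s ≠ Finset.univ →
      Res ((φ X ^ i)⁻¹ • ExteriorAlgebra.ιMulti (LaurentSeries k) n (s.piecewise w δ)) = 0 := by
    intro s hs
    obtain ⟨j₀, hj₀⟩ : ∃ j₀, j₀ ∉ s := by
      by_contra h; push_neg at h; exact hs (Finset.eq_univ_iff_forall.mpr h)
    have hup : (φ X ^ i)⁻¹ • (ExteriorAlgebra.ιMulti (LaurentSeries k) n) (s.piecewise w δ)
        = (ExteriorAlgebra.ιMulti (LaurentSeries k) n)
            (Function.update (s.piecewise w δ) j₀ ((φ X ^ i)⁻¹ • δ j₀)) := by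
      have h2 : s.piecewise w δ = Function.update (s.piecewise w δ) j₀
          ((φ X ^ i) • ((φ X ^ i)⁻¹ • δ j₀)) := by
        rw [smul_inv_smul₀ hxi,
          show δ j₀ = s.piecewise w δ j₀ from (Finset.piecewise_eq_of_notMem _ _ _ hj₀).symm,
          Function.update_eq_self]
      have h3 := (ExteriorAlgebra.ιMulti (LaurentSeries k) n).toMultilinearMap.map_update_smul
        (s.piecewise w δ) j₀ (φ X ^ i) ((φ X ^ i)⁻¹ • δ j₀)
      simp only [AlternatingMap.coe_multilinearMap] at h3
      conv_lhs => rw [h2]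
      rw [h3, inv_smul_smul₀ hxi]
    rw [hup]
    set C : Fin n → Fin 3 → PowerSeries k := fun j => ![c j, X, ((b j : PowerSeries k))] with hC
    set G : Fin n → Fin 3 → PowerSeries k := fun j =>
      if j = j₀ then
        ![(((a j)⁻¹ : (PowerSeries k)ˣ) : PowerSeries k) * X ^ (m - i),
          (m : PowerSeries k) * (((a j)⁻¹ : (PowerSeries k)ˣ) : PowerSeries k) * X ^ (m - 1 - i) * c j,
          (((a j)⁻¹ : (PowerSeries k)ˣ) : PowerSeries k) * (((b j)⁻¹ : (PowerSeries k)ˣ) : PowerSeries k) * (-(X ^ (m - i) * c j))]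
      else if j ∈ s then ![0, 0, (((b j)⁻¹ : (PowerSeries k)ˣ) : PowerSeries k)]
      else
        ![(((a j)⁻¹ : (PowerSeries k)ˣ) : PowerSeries k) * X ^ (m - 0),
          (m : PowerSeries k) * (((a j)⁻¹ : (PowerSeries k)ˣ) : PowerSeries k) * X ^ (m - 1 - 0) * c j,
          (((a j)⁻¹ : (PowerSeries k)ˣ) : PowerSeries k) * (((b j)⁻¹ : (PowerSeries k)ˣ) : PowerSeries k) * (-(X ^ (m - 0) * c j))] with hG
    have hslot : Function.update (s.piecewise w δ) j₀ ((φ X ^ i)⁻¹ • δ j₀)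
        = fun j => ∑ t : Fin 3, φ (G j t) •
            KaehlerDifferential.D ℤ (LaurentSeries k) (φ (C j t)) := by
      funext j
      by_cases hj : j = j₀
      · subst hj
        rw [Function.update_self, hδi j, hG, hC]
        simp [Fin.sum_univ_three]
      · rw [Function.update_of_ne hj]
        by_cases hjs : j ∈ s
        · rw [Finset.piecewise_eq_of_mem _ _ _ hjs, hwj j, hG, hC]
          simp [Fin.sum_univ_three, hj, hjs]
        · rw [Finset.piecewise_eq_of_notMem _ _ _ hjs, hδ0 j, hG, hC]
          simp [Fin.sum_univ_three, hj, hjs]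
    rw [hslot]
    exact resKey n Res hRes0 G C
  -- telescoping
  have hsum : (ExteriorAlgebra.ιMulti (LaurentSeries k) n) v
      = ∑ s : Finset (Fin n), (ExteriorAlgebra.ιMulti (LaurentSeries k) n) (s.piecewise w δ) := by
    have h0 : v = w + δ := by
      funext j
      show v j = w j + (v j - w j)
      abel
    rw [h0]
    have := (ExteriorAlgebra.ιMulti (LaurentSeries k) n).toMultilinearMap.map_add_univ w δ
    simpa only [AlternatingMap.coe_multilinearMap] using this
  have hzero : Res ((φ X ^ i)⁻¹ • (ExteriorAlgebra.ιMulti (LaurentSeries k) n) v)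
      - Res ((φ X ^ i)⁻¹ • (ExteriorAlgebra.ιMulti (LaurentSeries k) n) w) = 0 := by
    rw [← map_sub, myEsub]
    have h1 : (ExteriorAlgebra.ιMulti (LaurentSeries k) n) v
        - (ExteriorAlgebra.ιMulti (LaurentSeries k) n) w
        = ∑ s ∈ (Finset.univ : Finset (Finset (Fin n))).erase Finset.univ,
            (ExteriorAlgebra.ιMulti (LaurentSeries k) n) (s.piecewise w δ) := by
      rw [hsum, ← Finset.add_sum_erase _ _ (Finset.mem_univ (Finset.univ : Finset (Fin n))),
        Finset.piecewise_univ]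
      abel
    rw [h1, myEsmulsum, map_sum]
    refine Finset.sum_eq_zero fun s hs => key s (Finset.ne_of_mem_erase hs)
  exact sub_eq_zero.mp hzero

end
end
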